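/- arXiv:1702.07892 — 4 statements merged into one kernel-verified Lean document; each statement's English description precedes it below -/
import Mathlib

section
/- For all positive integers a and all integers b with 0 ≤ b ≤ a, the integer a / gcd(a, b) divides the binomial coefficient binom(a, b). -/
/-! Since `k * choose n k = n * choose (n - 1) (k - 1)`, `n` divides both `n * choose n k` and
`k * choose n k`, hence their gcd `gcd n k * choose n k`. -/

namespace Nat

theorem dvd_mul_choose : ∀ n k : ℕ, n ∣ k * n.choose k
  | 0, 0 => dvd_refl 0
  | 0, _ + 1 => by rw [choose_zero_succ, mul_zero]
  | _ + 1, 0 => by rw [zero_mul]; exact dvd_zero _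
  | n + 1, k + 1 => by
    rw [mul_comm, ← add_one_mul_choose_eq]
    exact dvd_mul_right _ _

theorem dvd_gcd_mul_choose (n k : ℕ) : n ∣ n.gcd k * n.choose k := by
  rw [← gcd_mul_right]
  exact dvd_gcd (dvd_mul_right n _) (dvd_mul_choose n k)

end Nat

theorem stmt_1_general (a b : ℕ) (ha : 0 < a) :
    a / Nat.gcd a b ∣ a.choose b :=
  (Nat.div_dvd_iff_dvd_mul (Nat.gcd_dvd_left a b) (Nat.gcd_pos_of_pos_left b ha)).mpr
    (Nat.dvd_gcd_mul_choose a b)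

theorem stmt_1 (a b : ℕ) (ha : 0 < a) (hb : b ≤ a) :
    a / Nat.gcd a b ∣ a.choose b :=
  stmt_1_general a b ha
end

section
/- For all positive integers l and k, l divides M_l(k), where M_l(k) = Σ_{j=0}^{l-1} (-1)^j * binom(2l, j) * (l - j)^{2k}. -/
theorem Nat.dvd_mul_choose_s2 (n k : ℕ) : n ∣ k * n.choose k := by
  rcases k with _ | k
  · simp
  rcases n with _ | n
  · simp
  exact ⟨n.choose k, by rw [mul_comm, ← add_one_mul_choose_eq]⟩

/-- From `2l ∣ j * C(2l, j)`, since `C(2l, j) * (l - j) = l * C(2l, j) - j * C(2l, j)`. -/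
theorem dvd_choose_two_mul_mul_sub (l j : ℕ) :
    (l : ℤ) ∣ ((2 * l).choose j : ℤ) * ((l : ℤ) - j) := by
  have h : (l : ℤ) ∣ j * (2 * l).choose j :=
    (dvd_mul_left (l : ℤ) 2).trans (mod_cast Nat.dvd_mul_choose_s2 (2 * l) j)
  rw [mul_sub, mul_comm _ (l : ℤ), mul_comm _ (j : ℤ)]
  exact (dvd_mul_right _ _).sub h

theorem stmt_2_general (l k : ℕ) (hk : 0 < k) :
    (l : ℤ) ∣ ∑ j ∈ Finset.range l,
      (-1 : ℤ) ^ j * ((2 * l).choose j : ℤ) * ((l : ℤ) - (j : ℤ)) ^ (2 * k) := by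
  obtain ⟨m, hm⟩ : ∃ m, 2 * k = m + 1 := ⟨2 * k - 1, by omega⟩
  refine Finset.dvd_sum fun j _ => ?_
  rw [hm, pow_succ]
  calc (l : ℤ) ∣ (-1) ^ j * ((l : ℤ) - j) ^ m * (((2 * l).choose j : ℤ) * ((l : ℤ) - j)) :=
        (dvd_choose_two_mul_mul_sub l j).mul_left _
    _ = _ := by ring

theorem stmt_2 (l k : ℕ) (hl : 0 < l) (hk : 0 < k) :
    (l : ℤ) ∣ ∑ j ∈ Finset.range l,
      (-1 : ℤ) ^ j * ((2 * l).choose j : ℤ) * ((l : ℤ) - (j : ℤ)) ^ (2 * k) :=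
  stmt_2_general l k hk
end

section
/- For every integer a and every positive integer k, the rational number a^{2k} * (a^{2k} - 1) * B_{2k} / (2k) is an integer, where B_{2k} denotes the 2k-th Bernoulli number. -/
/-!
With `S_j(a) = ∑_{r<a} r^j`, the generating function identity
`(B'(at) - B'(t)) · ∑_{r<a} e^{rt} = t · ∑_{r<a} r e^{rt}`, a consequence of `B'(t)(e^t - 1) = t e^t`,
gives `∑_i C(n,i) (a^i - 1) B'_i S_{n-i}(a) = n S_n(a)`. Multiplied by `a^{n-1}/n`, this writes
`T_n = a^n (a^n - 1) B'_n / n` as `a^{n-1} S_n(a)` minus an integral combination of `T_1, …, T_{n-1}`,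
so every `T_n` is an integer. For even `n`, `B_n = B'_n` and `a^n = |a|^n` reduce the theorem to
natural `a`.
-/

open PowerSeries Finset Nat

lemma sum_range_natCast_mul_pow_mul_sub_one_sq {R : Type*} [CommRing R] (x : R) (a : ℕ) :
    (∑ r ∈ range a, (r : R) * x ^ r) * (x - 1) ^ 2 = a * x ^ a * (x - 1) - (x ^ a - 1) * x := by
  induction a with
  | zero => simp
  | succ a ih =>
    rw [sum_range_succ, add_mul, ih]
    push_cast
    ring

def egf (f : ℕ → ℚ) : ℚ⟦X⟧ :=
  mk fun n => f n / n !

lemma coeff_egf (f : ℕ → ℚ) (n : ℕ) : coeff n (egf f) = f n / n ! :=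
  coeff_mk _ _

lemma coeff_egf_mul_egf (f g : ℕ → ℚ) (n : ℕ) :
    coeff n (egf f * egf g) = (∑ i ∈ range (n + 1), n.choose i * f i * g (n - i)) / n ! := by
  rw [coeff_mul, Nat.sum_antidiagonal_eq_sum_range_succ_mk, sum_div]
  refine sum_congr rfl fun i hi => ?_
  rw [coeff_egf, coeff_egf, cast_choose ℚ (mem_range_succ_iff.mp hi)]
  have := factorial_ne_zero i
  have := factorial_ne_zero (n - i)
  field_simp

def powerSum (j a : ℕ) : ℚ :=
  ∑ r ∈ range a, (r : ℚ) ^ j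

lemma sum_exp_pow_eq_egf (a : ℕ) :
    ∑ r ∈ range a, exp ℚ ^ r = egf fun n => powerSum n a := by
  ext n
  simp [coeff_egf, powerSum, exp_pow_eq_rescale_exp, coeff_exp, sum_mul, div_eq_mul_inv]

lemma X_mul_sum_natCast_mul_exp_pow_eq_egf (a : ℕ) :
    X * ∑ r ∈ range a, (r : ℚ⟦X⟧) * exp ℚ ^ r = egf fun n => n * powerSum n a := by
  ext n
  cases n with
  | zero => simp [coeff_egf]
  | succ n =>
    have hterm (r : ℕ) : coeff n ((r : ℚ⟦X⟧) * exp ℚ ^ r) = r ^ (n + 1) / n ! := by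
      rw [← map_natCast C, coeff_C_mul, exp_pow_eq_rescale_exp, coeff_rescale, coeff_exp]
      simp [pow_succ]
      ring
    have : (n ! : ℚ) ≠ 0 := mod_cast factorial_ne_zero n
    simp only [coeff_succ_X_mul, map_sum, hterm, coeff_egf, powerSum, factorial_succ]
    push_cast
    rw [← sum_div]
    field_simp

lemma rescale_bernoulli'PowerSeries_sub_eq_egf (a : ℚ) :
    rescale a (bernoulli'PowerSeries ℚ) - bernoulli'PowerSeries ℚ
      = egf fun n => (a ^ n - 1) * bernoulli' n := by
  ext n
  simp [coeff_egf, bernoulli'PowerSeries]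
  ring

lemma exp_sub_one_ne_zero : exp ℚ - 1 ≠ 0 := by
  intro h
  simpa using congrArg (coeff 1) h

lemma rescale_bernoulli'PowerSeries_mul_exp_pow_sub_one (a : ℕ) :
    rescale (a : ℚ) (bernoulli'PowerSeries ℚ) * (exp ℚ ^ a - 1) = (a : ℚ⟦X⟧) * X * exp ℚ ^ a := by
  rw [exp_pow_eq_rescale_exp, ← map_one (rescale (a : ℚ)), ← map_sub, ← map_mul,
    bernoulli'PowerSeries_mul_exp_sub_one, map_mul, rescale_X, map_natCast]

lemma egf_bernoulli'_mul_egf_powerSum (a : ℕ) :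
    (egf fun n => ((a : ℚ) ^ n - 1) * bernoulli' n) * (egf fun n => powerSum n a)
      = egf fun n => n * powerSum n a := by
  rw [← rescale_bernoulli'PowerSeries_sub_eq_egf, ← sum_exp_pow_eq_egf,
    ← X_mul_sum_natCast_mul_exp_pow_eq_egf]
  set E := exp ℚ
  set B := bernoulli'PowerSeries ℚ
  refine mul_right_cancel₀ (pow_ne_zero 2 exp_sub_one_ne_zero) ?_
  calc (rescale (a : ℚ) B - B) * (∑ r ∈ range a, E ^ r) * (E - 1) ^ 2
      = rescale (a : ℚ) B * (E ^ a - 1) * (E - 1) - B * (E - 1) * (E ^ a - 1) := by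
        rw [← geom_sum_mul]; ring
    _ = X * ((a : ℚ⟦X⟧) * E ^ a * (E - 1) - (E ^ a - 1) * E) := by
        rw [rescale_bernoulli'PowerSeries_mul_exp_pow_sub_one,
          bernoulli'PowerSeries_mul_exp_sub_one]
        ring
    _ = X * (∑ r ∈ range a, (r : ℚ⟦X⟧) * E ^ r) * (E - 1) ^ 2 := by
        rw [mul_assoc X, sum_range_natCast_mul_pow_mul_sub_one_sq]

theorem sum_choose_mul_bernoulli'_mul_powerSum (a n : ℕ) :
    ∑ i ∈ range (n + 1), n.choose i * (((a : ℚ) ^ i - 1) * bernoulli' i) * powerSum (n - i) a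
      = n * powerSum n a := by
  have h := congrArg (coeff n) (egf_bernoulli'_mul_egf_powerSum a)
  rwa [coeff_egf_mul_egf, coeff_egf, div_left_inj' (mod_cast factorial_ne_zero n)] at h

def lipschitzSylvester (a : ℚ) (n : ℕ) : ℚ :=
  a ^ n * (a ^ n - 1) * bernoulli' n / n

lemma powerSum_zero (a : ℕ) : powerSum 0 a = a := by
  simp [powerSum]

lemma pow_mul_powerSum_succ (a n : ℕ) :
    (a : ℚ) ^ n * powerSum (n + 1) a = lipschitzSylvester a (n + 1)
      + ∑ j ∈ range n, n.choose j * (a : ℚ) ^ (n - 1 - j) * powerSum (n - j) a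
          * lipschitzSylvester a (j + 1) := by
  have h := sum_choose_mul_bernoulli'_mul_powerSum a (n + 1)
  rw [sum_range_succ', sum_range_succ] at h
  simp only [choose_self, Nat.sub_self, powerSum_zero, pow_zero, sub_self, zero_mul, mul_zero,
    add_zero, Nat.add_sub_add_right] at h
  have hn : (n + 1 : ℚ) ≠ 0 := by positivity
  have hterm : ∀ j ∈ range n, (a : ℚ) ^ n *
      ((n + 1).choose (j + 1) * (((a : ℚ) ^ (j + 1) - 1) * bernoulli' (j + 1))
        * powerSum (n - j) a) / (n + 1)
      = n.choose j * (a : ℚ) ^ (n - 1 - j) * powerSum (n - j) a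
          * lipschitzSylvester a (j + 1) := by
    intro j hj
    -- `C(n+1, j+1) / (n+1) = C(n, j) / (j+1)`, and the `j+1` is absorbed into `T_{j+1}`.
    have hchoose : ((n + 1).choose (j + 1) : ℚ) * (j + 1) = (n + 1) * n.choose j :=
      mod_cast (add_one_mul_choose_eq n j).symm
    have hpow : (a : ℚ) ^ n = (a : ℚ) ^ (n - 1 - j) * (a : ℚ) ^ (j + 1) := by
      rw [← pow_add]
      congr 1
      have := mem_range.mp hj
      omega
    rw [lipschitzSylvester, hpow]
    field_simp
    push_cast
    linear_combination (a : ℚ) ^ (n - 1 - j) * (a : ℚ) ^ (j + 1) * ((a : ℚ) ^ (j + 1) - 1)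
      * bernoulli' (j + 1) * powerSum (n - j) a * hchoose
  calc (a : ℚ) ^ n * powerSum (n + 1) a
      = (a : ℚ) ^ n * ((n + 1 : ℕ) * powerSum (n + 1) a) / (n + 1) := by
        push_cast; field_simp
    _ = _ := by
        rw [← h, mul_add, add_div, mul_sum, sum_div, sum_congr rfl hterm, lipschitzSylvester]
        push_cast
        ring

lemma powerSum_mem_bot (j a : ℕ) : powerSum j a ∈ (⊥ : Subring ℚ) :=
  sum_mem fun r _ => pow_mem (natCast_mem _ r) j

theorem lipschitzSylvester_succ_mem_bot (a n : ℕ) :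
    lipschitzSylvester a (n + 1) ∈ (⊥ : Subring ℚ) := by
  induction n using Nat.strong_induction_on with
  | _ n ih =>
    rw [eq_sub_of_add_eq (pow_mul_powerSum_succ a n).symm]
    refine sub_mem (mul_mem (pow_mem (natCast_mem _ a) n) (powerSum_mem_bot _ a))
      (sum_mem fun j hj => mul_mem ?_ (ih j (mem_range.mp hj)))
    exact mul_mem (mul_mem (natCast_mem _ _) (pow_mem (natCast_mem _ a) _)) (powerSum_mem_bot _ a)

theorem stmt_4 (a : ℤ) (k : ℕ) (hk : 0 < k) :
    ∃ n : ℤ, (a : ℚ) ^ (2 * k) * ((a : ℚ) ^ (2 * k) - 1) * bernoulli (2 * k) / (2 * k)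
      = (n : ℚ) := by
  obtain ⟨m, hm⟩ : ∃ m, 2 * k = m + 1 := ⟨2 * k - 1, by omega⟩
  have habs : (a.natAbs : ℚ) ^ (2 * k) = (a : ℚ) ^ (2 * k) := by
    rw [Nat.cast_natAbs, Int.cast_abs, pow_abs_two_mul]
  obtain ⟨n, hn⟩ := Subring.mem_bot.mp (lipschitzSylvester_succ_mem_bot a.natAbs m)
  refine ⟨n, ?_⟩
  rw [hn, ← hm, lipschitzSylvester, bernoulli_eq_bernoulli'_of_ne_one (by omega)]
  push_cast
  rw [habs]
end

section
/- Let p be an odd prime and k a positive integer such that (p - 1) divides 2k, and let μ = ν_p(2k) be the p-adic valuation of 2k. Then p^{μ+1} divides (2k-1)! * (2k+1) * (2k) * (3k). -/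
theorem stmt_7 (p k : ℕ) (hp : p.Prime) (hodd : Odd p) (hk : 0 < k)
    (hdvd : (p - 1) ∣ 2 * k) :
    p ^ (padicValNat p (2 * k) + 1) ∣
      Nat.factorial (2 * k - 1) * (2 * k + 1) * (2 * k) * (3 * k) := by
  have h2k : 0 < 2 * k := by omega
  have h1 : p ^ padicValNat p (2 * k) ∣ 2 * k := pow_padicValNat_dvd
  have hple : p ≤ 2 * k + 1 := by
    have := Nat.le_of_dvd h2k hdvd
    have := hp.two_le
    omega
  have hpne : p ≠ 2 * k := by
    rintro rfl
    exact (Nat.not_odd_iff_even.mpr ⟨k, by ring⟩) hodd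
  rcases Nat.lt_or_ge p (2 * k) with h | h
  · have hfac : p ∣ Nat.factorial (2 * k - 1) :=
      Nat.dvd_factorial hp.pos (by omega)
    calc p ^ (padicValNat p (2 * k) + 1)
        = p ^ padicValNat p (2 * k) * p := pow_succ p _
      _ ∣ (2 * k) * Nat.factorial (2 * k - 1) := mul_dvd_mul h1 hfac
      _ ∣ _ := ⟨(2 * k + 1) * (3 * k), by ring⟩
  · have hp1 : p = 2 * k + 1 := by omega
    calc p ^ (padicValNat p (2 * k) + 1)
        = p ^ padicValNat p (2 * k) * p := pow_succ p _
      _ ∣ (2 * k) * (2 * k + 1) := mul_dvd_mul h1 (hp1 ▸ dvd_refl p)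
      _ ∣ _ := ⟨Nat.factorial (2 * k - 1) * (3 * k), by ring⟩
end
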